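/- (Lower bound from error-correcting codes) Let d, k, r be positive integers and let G : {-1,1}^k → {-1,1}^d be a map such that any two distinct codewords G(z), G(z') differ in at least 2r+1 coordinates. For j ∈ [k] let W_j = {G(z) : z ∈ {-1,1}^k, z_j = 1} and define g_j(x) = max{1 - r/(2d), max_{w ∈ W_j} ⟨w/√d, x⟩} on K = B₂^d. Let F_D(x) = (1/k) Σ_{j=1}^k g_j(x) and F* = min_{x ∈ K} F_D(x). Then for every n ≤ k/2 and every tuple of indices j₁, ..., jₙ ∈ [k], setting F_S(x) = (1/n) Σ_{i=1}^n g_{j_i}(x), there exists x̂ ∈ K with F_S(x̂) = min_{x ∈ K} F_S(x) and F_D(x̂) - F* ≥ r/(4d). -/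

import Mathlib

open scoped RealInnerProductSpace BigOperators
attribute [local instance] Classical.propDecidable

lemma inner_scaled_aux (d : ℕ) (hd : 0 < d) (x y : EuclideanSpace ℝ (Fin d)) :
    ⟪(Real.sqrt d)⁻¹ • x, (Real.sqrt d)⁻¹ • y⟫ = (∑ i, x i * y i) / d := by
  rw [real_inner_smul_left, real_inner_smul_right, PiLp.inner_apply]
  simp only [RCLike.inner_apply, conj_trivial]
  have : (Real.sqrt d) * Real.sqrt d = d := Real.mul_self_sqrt (by positivity)
  field_simp
  rw [Real.sq_sqrt (by positivity)]
  rw [Finset.sum_congr rfl (fun i _ => mul_comm (y.ofLp i) (x.ofLp i))]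
  ring

lemma norm_scaled_aux (d : ℕ) (hd : 0 < d) (x : EuclideanSpace ℝ (Fin d))
    (hx : ∀ i, x i = 1 ∨ x i = -1) : ‖(Real.sqrt d)⁻¹ • x‖ = 1 := by
  have hn : ‖x‖ = Real.sqrt d := by
    rw [EuclideanSpace.norm_eq]
    congr 1
    rw [Finset.sum_congr rfl (fun i _ => show ‖x i‖ ^ 2 = 1 by
      rcases hx i with h | h <;> rw [h] <;> norm_num)]
    simp
  rw [norm_smul, hn, norm_inv, Real.norm_eq_abs, abs_of_nonneg (Real.sqrt_nonneg _),
    inv_mul_cancel₀ (by positivity)]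

lemma sum_prod_eq_aux (d : ℕ) (x y : EuclideanSpace ℝ (Fin d))
    (hx : ∀ i, x i = 1 ∨ x i = -1) (hy : ∀ i, y i = 1 ∨ y i = -1) :
    ∑ i, x i * y i = (d : ℝ) - 2 * (Finset.univ.filter (fun i : Fin d => x i ≠ y i)).card := by
  classical
  simp only [ne_eq]
  rw [← Finset.sum_filter_add_sum_filter_not Finset.univ (fun i => x i = y i)]
  have h1 : ∀ i ∈ Finset.univ.filter (fun i : Fin d => x i = y i), x i * y i = 1 := by
    intro i hi
    have := (Finset.mem_filter.1 hi).2
    rw [← this]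
    rcases hx i with h | h <;> rw [h] <;> norm_num
  have h2 : ∀ i ∈ Finset.univ.filter (fun i : Fin d => ¬ x i = y i), x i * y i = -1 := by
    intro i hi
    have hne := (Finset.mem_filter.1 hi).2
    rcases hx i with h | h <;> rcases hy i with h' | h'
    · exact absurd (h.trans h'.symm) hne
    · rw [h, h']; norm_num
    · rw [h, h']; norm_num
    · exact absurd (h.trans h'.symm) hne
  rw [Finset.sum_congr rfl h1, Finset.sum_congr rfl h2, Finset.sum_const, Finset.sum_const]
  have hc : (Finset.univ.filter (fun i : Fin d => x i = y i)).card
      + (Finset.univ.filter (fun i : Fin d => ¬ x i = y i)).card = d := by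
    rw [Finset.card_filter_add_card_filter_not, Finset.card_univ, Fintype.card_fin]
  have := congrArg (fun m : ℕ => (m : ℝ)) hc
  push_cast at this ⊢
  simp only [nsmul_eq_mul]
  linarith

lemma sum_prod_self_aux (d : ℕ) (x : EuclideanSpace ℝ (Fin d))
    (hx : ∀ i, x i = 1 ∨ x i = -1) : ∑ i, x i * x i = (d : ℝ) := by
  rw [Finset.sum_congr rfl (fun i _ => show x i * x i = 1 by
    rcases hx i with h | h <;> rw [h] <;> norm_num)]
  simp

/-- Given a code `G : {-1,1}^k → {-1,1}^d` (messages modelled as `Fin k → Bool`, with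
`z_j = 1` corresponding to `z j = true`), `g_j(x) = max{1 - r/(2d), max_{w ∈ W_j} ⟨w/√d, x⟩}`
where `W_j = {G(z) : z_j = 1}`. -/
noncomputable def gCode {d k : ℕ} (r : ℕ) (G : (Fin k → Bool) → EuclideanSpace ℝ (Fin d))
    (j : Fin k) (x : EuclideanSpace ℝ (Fin d)) : ℝ :=
  (Finset.univ.filter (fun z : Fin k → Bool => z j = true)).fold max
    (1 - (r : ℝ) / (2 * d)) (fun z => ⟪(Real.sqrt d)⁻¹ • G z, x⟫)

lemma base_le_gCode {d k : ℕ} (r : ℕ) (G : (Fin k → Bool) → EuclideanSpace ℝ (Fin d))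
    (j : Fin k) (x : EuclideanSpace ℝ (Fin d)) :
    1 - (r : ℝ) / (2 * d) ≤ gCode r G j x :=
  (Finset.le_fold_max _).2 (Or.inl le_rfl)

/-- Lower bound from error-correcting codes: Let
`G : {-1,1}^k → {-1,1}^d` be such that any two distinct codewords differ in at least
`2r+1` coordinates. With `F_D(x) = (1/k) Σ_j g_j(x)` and `F* = min_{B₂^d} F_D`, for every
`n ≤ k/2` and every tuple of indices `j₁,...,jₙ ∈ [k]`, setting
`F_S(x) = (1/n) Σᵢ g_{jᵢ}(x)`, there exists `xhat ∈ B₂^d` with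
`F_S(xhat) = min_{B₂^d} F_S` and `F_D(xhat) - F* ≥ r/(4d)`. -/
theorem erm_lower_bound_from_code {d k r n : ℕ} (hd : 0 < d) (hk : 0 < k) (hr : 0 < r)
    (G : (Fin k → Bool) → EuclideanSpace ℝ (Fin d))
    (hG : ∀ z, ∀ i : Fin d, G z i = 1 ∨ G z i = -1)
    (hdist : ∀ z z', z ≠ z' →
      2 * r + 1 ≤ (Finset.univ.filter (fun i : Fin d => G z i ≠ G z' i)).card)
    (K : Set (EuclideanSpace ℝ (Fin d))) (hK : K = Metric.closedBall 0 1)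
    (FD : EuclideanSpace ℝ (Fin d) → ℝ)
    (hFD : FD = fun x => (∑ j : Fin k, gCode r G j x) / (k : ℝ))
    (Fstar : ℝ) (hFstar : Fstar = sInf (FD '' K))
    (hn : (n : ℝ) ≤ (k : ℝ) / 2) (js : Fin n → Fin k)
    (FS : EuclideanSpace ℝ (Fin d) → ℝ)
    (hFS : FS = fun x => (∑ i : Fin n, gCode r G (js i) x) / (n : ℝ)) :
    ∃ xhat ∈ K, (∀ y ∈ K, FS xhat ≤ FS y) ∧ FD xhat - Fstar ≥ (r : ℝ) / (4 * d) := by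
  classical
  set b : ℝ := 1 - (r : ℝ) / (2 * d) with hb
  -- basic numeric facts
  have hdR : (0 : ℝ) < d := by exact_mod_cast hd
  have hkR : (0 : ℝ) < k := by exact_mod_cast hk
  have hrR : (0 : ℝ) < r := by exact_mod_cast hr
  -- 2r+1 ≤ d
  have hrd : 2 * r + 1 ≤ d := by
    have hne : (fun _ : Fin k => false) ≠ (fun _ : Fin k => true) := by
      intro h
      have := congrFun h ⟨0, hk⟩
      simp at this
    calc 2 * r + 1 ≤ _ := hdist _ _ hne
      _ ≤ (Finset.univ : Finset (Fin d)).card := Finset.card_filter_le _ _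
      _ = d := by simp
  have hrdR : 2 * (r : ℝ) + 1 ≤ d := by exact_mod_cast hrd
  have hb_pos : 0 < b := by
    rw [hb]
    have : (r : ℝ) / (2 * d) < 1 := by
      rw [div_lt_one (by positivity)]
      linarith
    linarith
  -- the adversarial message
  set zstar : Fin k → Bool := fun j => if ∃ i, js i = j then false else true with hzstar
  set xhat : EuclideanSpace ℝ (Fin d) := (Real.sqrt d)⁻¹ • G zstar with hxhat
  have hxhatK : xhat ∈ K := by
    rw [hK, Metric.mem_closedBall, dist_zero_right, hxhat,
      norm_scaled_aux d hd _ (hG zstar)]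
  -- inner products with xhat
  have hinner : ∀ z, ⟪(Real.sqrt d)⁻¹ • G z, xhat⟫
      = ((d : ℝ) - 2 * (Finset.univ.filter (fun i : Fin d => G z i ≠ G zstar i)).card) / d := by
    intro z
    rw [hxhat, inner_scaled_aux d hd, sum_prod_eq_aux d _ _ (hG z) (hG zstar)]
  have hinner_self : ⟪(Real.sqrt d)⁻¹ • G zstar, xhat⟫ = 1 := by
    rw [hxhat, inner_scaled_aux d hd, sum_prod_self_aux d _ (hG zstar),
      div_self (ne_of_gt hdR)]
  have hinner_ne : ∀ z, z ≠ zstar → ⟪(Real.sqrt d)⁻¹ • G z, xhat⟫ ≤ b := by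
    intro z hz
    rw [hinner z]
    have hcard : (2 * r + 1 : ℝ)
        ≤ (Finset.univ.filter (fun i : Fin d => G z i ≠ G zstar i)).card := by
      exact_mod_cast hdist z zstar hz
    have hhalf : (r : ℝ) / (2 * d) * d = r / 2 := by field_simp
    rw [hb, div_le_iff₀ hdR]
    nlinarith [hcard, hhalf]
  -- gCode at xhat
  have hg_false : ∀ j : Fin k, zstar j = false → gCode r G j xhat = b := by
    intro j hj
    refine le_antisymm ((Finset.fold_max_le _).2 ⟨le_rfl, ?_⟩) (base_le_gCode r G j xhat)
    intro z hz
    have hzj : z j = true := (Finset.mem_filter.1 hz).2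
    refine hinner_ne z ?_
    intro h
    rw [h, hj] at hzj
    exact Bool.false_ne_true hzj
  have hg_true : ∀ j : Fin k, zstar j = true → (1 : ℝ) ≤ gCode r G j xhat := by
    intro j hj
    refine (Finset.le_fold_max _).2 (Or.inr ⟨zstar, ?_, hinner_self.ge⟩)
    exact Finset.mem_filter.2 ⟨Finset.mem_univ _, hj⟩
  -- gCode at 0
  have hg_zero : ∀ j : Fin k, gCode r G j (0 : EuclideanSpace ℝ (Fin d)) = b := by
    intro j
    refine le_antisymm ((Finset.fold_max_le _).2 ⟨le_rfl, ?_⟩) (base_le_gCode r G j 0)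
    intro z _
    rw [inner_zero_right]
    exact hb_pos.le
  -- sampled coordinates of zstar are false
  have hzs : ∀ i : Fin n, zstar (js i) = false := by
    intro i
    rw [hzstar]
    exact if_pos ⟨i, rfl⟩
  -- FS xhat is a minimum
  have hFSmin : ∀ y ∈ K, FS xhat ≤ FS y := by
    intro y _
    rw [hFS]
    rcases Nat.eq_zero_or_pos n with hn0 | hn0
    · subst hn0; simp
    · have hnR : (0 : ℝ) < n := by exact_mod_cast hn0
      have h1 : ∑ i : Fin n, gCode r G (js i) xhat = ∑ i : Fin n, b :=
        Finset.sum_congr rfl (fun i _ => hg_false (js i) (hzs i))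
      have h2 : ∑ i : Fin n, b ≤ ∑ i : Fin n, gCode r G (js i) y :=
        Finset.sum_le_sum (fun i _ => base_le_gCode r G (js i) y)
      calc (∑ i : Fin n, gCode r G (js i) xhat) / (n : ℝ)
            = (∑ _i : Fin n, b) / (n : ℝ) := by rw [h1]
        _ ≤ (∑ i : Fin n, gCode r G (js i) y) / (n : ℝ) := by gcongr
  -- counting
  set T : Finset (Fin k) := Finset.univ.filter (fun j : Fin k => zstar j = true) with hT
  set Tc : Finset (Fin k) := Finset.univ.filter (fun j : Fin k => ¬ zstar j = true) with hTc
  have hcardsum : T.card + Tc.card = k := by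
    rw [hT, hTc, Finset.card_filter_add_card_filter_not, Finset.card_univ,
      Fintype.card_fin]
  have hTc_le : Tc.card ≤ n := by
    have hsub : Tc ⊆ Finset.univ.image js := by
      intro j hj
      have hj' : ¬ zstar j = true := (Finset.mem_filter.1 hj).2
      rw [hzstar] at hj'
      by_cases hex : ∃ i, js i = j
      · obtain ⟨i, hi⟩ := hex
        exact Finset.mem_image.2 ⟨i, Finset.mem_univ _, hi⟩
      · exact absurd (by simp [if_neg hex]) hj'
    calc Tc.card ≤ (Finset.univ.image js).card := Finset.card_le_card hsub
      _ ≤ (Finset.univ : Finset (Fin n)).card := Finset.card_image_le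
      _ = n := by simp
  set tR : ℝ := (T.card : ℝ) with htR
  have ht_ge : (k : ℝ) / 2 ≤ tR := by
    have h1 : (T.card : ℝ) + (Tc.card : ℝ) = k := by exact_mod_cast hcardsum
    have h2 : (Tc.card : ℝ) ≤ n := by exact_mod_cast hTc_le
    rw [htR]; linarith
  -- lower bound on the sum at xhat
  have hsum : tR + ((k : ℝ) - tR) * b ≤ ∑ j : Fin k, gCode r G j xhat := by
    rw [← Finset.sum_filter_add_sum_filter_not Finset.univ (fun j : Fin k => zstar j = true)]
    have hA : tR ≤ ∑ j ∈ T, gCode r G j xhat := by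
      calc tR = ∑ _j ∈ T, (1 : ℝ) := by rw [htR]; simp
        _ ≤ _ := Finset.sum_le_sum (fun j hj => hg_true j (Finset.mem_filter.1 hj).2)
    have hB : ((k : ℝ) - tR) * b ≤ ∑ j ∈ Tc, gCode r G j xhat := by
      have h1 : (k : ℝ) - tR = (Tc.card : ℝ) := by
        have : (T.card : ℝ) + (Tc.card : ℝ) = k := by exact_mod_cast hcardsum
        rw [htR]; linarith
      calc ((k : ℝ) - tR) * b = ∑ _j ∈ Tc, b := by rw [h1]; simp [mul_comm]
        _ ≤ _ := Finset.sum_le_sum (fun j hj => by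
            have hj' : ¬ zstar j = true := (Finset.mem_filter.1 hj).2
            exact base_le_gCode r G j xhat)
    exact add_le_add hA hB
  -- Fstar ≤ b
  have hFD0 : FD 0 = b := by
    rw [hFD]
    simp only [hg_zero]
    rw [Finset.sum_const]
    simp [nsmul_eq_mul]
    field_simp
  have hbdd : BddBelow (FD '' K) := by
    refine ⟨b, ?_⟩
    rintro v ⟨y, _, rfl⟩
    rw [hFD]
    have : ∑ j : Fin k, b ≤ ∑ j : Fin k, gCode r G j y :=
      Finset.sum_le_sum (fun j _ => base_le_gCode r G j y)
    simp only [Finset.sum_const, Finset.card_univ, Fintype.card_fin, nsmul_eq_mul] at this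
    rw [le_div_iff₀ hkR]
    linarith
  have h0K : (0 : EuclideanSpace ℝ (Fin d)) ∈ K := by
    rw [hK]; simp
  have hFstar_le : Fstar ≤ b := by
    rw [hFstar, ← hFD0]
    exact csInf_le hbdd ⟨0, h0K, rfl⟩
  -- final inequality
  have hFDxhat : (tR + ((k : ℝ) - tR) * b) / k ≤ FD xhat := by
    rw [hFD]
    simp only
    gcongr
  have key : (r : ℝ) / (4 * d) ≤ (tR + ((k : ℝ) - tR) * b) / k - b := by
    have heq : (tR + ((k : ℝ) - tR) * b) / k - b = tR * ((r : ℝ) / (2 * d)) / k := by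
      rw [hb]; field_simp; ring
    rw [heq, div_le_div_iff₀ (by positivity) hkR]
    have h4 : tR * ((r : ℝ) / (2 * d)) * (4 * d) = 2 * tR * (r : ℝ) := by
      field_simp; ring
    rw [h4]
    nlinarith [mul_le_mul_of_nonneg_left ht_ge hrR.le]
  refine ⟨xhat, hxhatK, hFSmin, ?_⟩
  exact le_trans key (sub_le_sub hFDxhat hFstar_le)
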